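/- If 0 < α < 1, then the stationary distribution of P is unique: any probability distribution μ on Ω (μ(e) ≥ 0 for all e, ∑_{e ∈ Ω} μ(e) = 1) satisfying μP = μ is equal to π, where π(i,j) = α·m(i,j)/(2|E|) for i ≠ j and π(i,i) = (1−α)·d_sum(i)/(2|E|). -/

import Mathlib

open Finset

namespace RWStmt

variable {V : Type*} [Fintype V] [DecidableEq V]

/-- Out-neighbors: `N_out(v) = {u : (v,u) ∈ E}`. -/
def Nout (E : Finset (V × V)) (v : V) : Finset V :=
  Finset.univ.filter fun u => (v, u) ∈ E

/-- In-neighbors: `N_in(v) = {u : (u,v) ∈ E}`. -/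
def Nin (E : Finset (V × V)) (v : V) : Finset V :=
  Finset.univ.filter fun u => (u, v) ∈ E

/-- Neighbors: `N(v) = N_out(v) ∪ N_in(v)`. -/
def Nbr (E : Finset (V × V)) (v : V) : Finset V :=
  Nout E v ∪ Nin E v

/-- Total degree: `d_sum(v) = d_out(v) + d_in(v)`. -/
def dsum (E : Finset (V × V)) (v : V) : ℕ :=
  (Nout E v).card + (Nin E v).card

/-- Edge multiplicity: `m(i,j) = 𝟙[j ∈ N_out(i)] + 𝟙[j ∈ N_in(i)]`. -/
def edgeMul (E : Finset (V × V)) (i j : V) : ℝ :=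
  (if j ∈ Nout E i then 1 else 0) + (if j ∈ Nin E i then 1 else 0)

/-- State space `Ω = {(i,j) : (i,j) ∈ E or (j,i) ∈ E or i = j}`. -/
def states (E : Finset (V × V)) : Finset (V × V) :=
  Finset.univ.filter fun p => p ∈ E ∨ (p.2, p.1) ∈ E ∨ p.1 = p.2

/-- The graph is weakly connected: any two vertices are joined by a path in the
symmetric closure of the edge relation. -/
def WeaklyConnected (E : Finset (V × V)) : Prop :=
  ∀ i j : V, Relation.ReflTransGen (fun a b => (a, b) ∈ E ∨ (b, a) ∈ E) i j

/-- Transition matrix of the proposed sampling algorithm: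
`P((i,j),(l,k)) = α·m(i,k)/d_sum(i)` if `l = i`;
`(1-α)·m(i,k)/d_sum(i)` if `l = k` and `l ∈ N(i)`; else `0`. -/
noncomputable def trans (E : Finset (V × V)) (α : ℝ) (e e' : V × V) : ℝ :=
  if e'.1 = e.1 then α * edgeMul E e.1 e'.2 / (dsum E e.1 : ℝ)
  else if e'.1 = e'.2 ∧ e'.1 ∈ Nbr E e.1 then
    (1 - α) * edgeMul E e.1 e'.2 / (dsum E e.1 : ℝ)
  else 0

/-- The stationary distribution:
`π(i,j) = α·m(i,j)/(2|E|)` for `i ≠ j`, and `π(i,i) = (1-α)·d_sum(i)/(2|E|)`. -/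
noncomputable def statDist (E : Finset (V × V)) (α : ℝ) (e : V × V) : ℝ :=
  if e.1 = e.2 then (1 - α) * (dsum E e.1 : ℝ) / (2 * (E.card : ℝ))
  else α * edgeMul E e.1 e.2 / (2 * (E.card : ℝ))

lemma mem_states {E : Finset (V × V)} {p : V × V} :
    p ∈ states E ↔ (p ∈ E ∨ (p.2, p.1) ∈ E ∨ p.1 = p.2) := by simp [states]

lemma edgeMul_nonneg (E : Finset (V × V)) (i j : V) : 0 ≤ edgeMul E i j := by
  unfold edgeMul; positivity

lemma edgeMul_symm (E : Finset (V × V)) (i j : V) : edgeMul E i j = edgeMul E j i := by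
  simp [edgeMul, Nout, Nin, add_comm]

lemma sum_edgeMul (E : Finset (V × V)) (l : V) :
    ∑ k, edgeMul E l k = (dsum E l : ℝ) := by
  unfold edgeMul dsum
  push_cast
  rw [Finset.sum_add_distrib]
  congr 1 <;> · rw [Finset.sum_boole]; simp [Finset.filter_mem_eq_inter]

lemma edgeMul_self (E : Finset (V × V)) (hE : ∀ v : V, (v, v) ∉ E) (l : V) :
    edgeMul E l l = 0 := by
  simp [edgeMul, Nout, Nin, hE l]

lemma dsum_pos (E : Finset (V × V)) (hconn : WeaklyConnected E)
    (hcard : 2 ≤ Fintype.card V) (v : V) : 0 < dsum E v := by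
  obtain ⟨w, hw⟩ := Fintype.exists_ne_of_one_lt_card (by omega) v
  rcases (hconn v w).cases_head with h | ⟨c, hc, _⟩
  · exact absurd h.symm hw
  · rcases hc with hc | hc
    · have hm : c ∈ Nout E v := by simp [Nout, hc]
      have := Finset.card_pos.mpr ⟨c, hm⟩
      unfold dsum; omega
    · have hm : c ∈ Nin E v := by simp [Nin, hc]
      have := Finset.card_pos.mpr ⟨c, hm⟩
      unfold dsum; omega

lemma sum_dsum (E : Finset (V × V)) : ∑ v, dsum E v = 2 * E.card := by
  have h1 : ∑ v, (Nout E v).card = E.card := by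
    simp only [Nout, Finset.card_filter]
    rw [← Fintype.sum_prod_type (f := fun p : V × V => if p ∈ E then (1:ℕ) else 0)]
    rw [Finset.sum_boole]
    simp [Finset.filter_mem_eq_inter]
  have h2 : ∑ v, (Nin E v).card = E.card := by
    simp only [Nin, Finset.card_filter]
    rw [← Fintype.sum_prod_type_right (f := fun p : V × V => if p ∈ E then (1:ℕ) else 0)]
    rw [Finset.sum_boole]
    simp [Finset.filter_mem_eq_inter]
  unfold dsum
  rw [Finset.sum_add_distrib, h1, h2]; omega

/-- if `0 < α < 1`, the stationary distribution of `P` is unique: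
any probability distribution `μ` on `Ω` with `μP = μ` equals `π`. -/
theorem stmt_7 (E : Finset (V × V)) (hE : ∀ v : V, (v, v) ∉ E)
    (hconn : WeaklyConnected E) (hcard : 2 ≤ Fintype.card V)
    (α : ℝ) (hα0 : 0 < α) (hα1 : α < 1)
    (μ : V × V → ℝ) (hnn : ∀ e ∈ states E, 0 ≤ μ e)
    (hsum : ∑ e ∈ states E, μ e = 1)
    (hstat : ∀ e' ∈ states E, ∑ e ∈ states E, μ e * trans E α e e' = μ e') :
    ∀ e ∈ states E, μ e = statDist E α e := by
  classical
  have hd : ∀ v, 0 < dsum E v := dsum_pos E hconn hcard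
  have hdR : ∀ v, (0:ℝ) < (dsum E v : ℝ) := fun v => by exact_mod_cast hd v
  have hdne : ∀ v, (dsum E v : ℝ) ≠ 0 := fun v => ne_of_gt (hdR v)
  set μ' : V × V → ℝ := fun e => if e ∈ states E then μ e else 0 with hμ'def
  have hμ'eq : ∀ e ∈ states E, μ' e = μ e := fun e he => if_pos he
  -- transitions into states outside Ω vanish
  have htrans0 : ∀ e' : V × V, e' ∉ states E → ∀ e : V × V, trans E α e e' = 0 := by
    intro e' he' e
    rw [mem_states] at he'
    push_neg at he'
    unfold trans
    split_ifs with h1 h2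
    · have hm : edgeMul E e.1 e'.2 = 0 := by
        rw [← h1]
        have h1' : (e'.1, e'.2) ∉ E := by simpa using he'.1
        have h2' : (e'.2, e'.1) ∉ E := he'.2.1
        simp [edgeMul, Nout, Nin, h1', h2']
      rw [hm]; simp
    · exact absurd h2.1 he'.2.2
    · rfl
  -- extended stationarity
  have hstat' : ∀ e' : V × V, ∑ e, μ' e * trans E α e e' = μ' e' := by
    intro e'
    by_cases he' : e' ∈ states E
    · rw [hμ'eq e' he', ← hstat e' he']
      rw [← Finset.sum_subset (Finset.subset_univ (states E))
        (fun e _ he => by simp [hμ'def, if_neg he])]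
      exact Finset.sum_congr rfl fun e he => by rw [hμ'eq e he]
    · rw [hμ'def]; simp only [if_neg he']
      exact Finset.sum_eq_zero fun e _ => by rw [htrans0 e' he' e, mul_zero]
  set ν : V → ℝ := fun i => ∑ j, μ' (i, j) with hνdef
  -- transition formulas
  have htr_ne : ∀ (i j l k : V), l ≠ k →
      trans E α (i, j) (l, k) = if i = l then α * edgeMul E l k / (dsum E l : ℝ) else 0 := by
    intro i j l k hlk
    unfold trans
    simp only
    by_cases h1 : l = i
    · subst h1; simp
    · rw [if_neg h1, if_neg (fun hc : l = k ∧ _ => hlk hc.1),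
        if_neg (fun hc : i = l => h1 hc.symm)]
  have htr_diag : ∀ (i j l : V),
      trans E α (i, j) (l, l) = (1 - α) * edgeMul E i l / (dsum E i : ℝ) := by
    intro i j l
    unfold trans
    simp only
    split_ifs with h1 h2
    · subst h1; rw [edgeMul_self E hE]; simp
    · rfl
    · have hl : l ∉ Nbr E i := fun h => h2 ⟨by trivial, h⟩
      have : edgeMul E i l = 0 := by
        simp only [Nbr, Finset.mem_union, not_or] at hl
        simp [edgeMul, hl.1, hl.2]
      rw [this]; simp
  -- off-diagonal formula for μ'
  have hA : ∀ l k : V, l ≠ k →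
      μ' (l, k) = ν l * (α * edgeMul E l k / (dsum E l : ℝ)) := by
    intro l k hlk
    rw [← hstat' (l, k), Fintype.sum_prod_type]
    have key : ∀ i j : V, μ' (i, j) * trans E α (i, j) (l, k) =
        if i = l then μ' (i, j) * (α * edgeMul E l k / (dsum E l : ℝ)) else 0 := by
      intro i j; rw [htr_ne i j l k hlk]; split_ifs <;> simp
    simp_rw [key]
    rw [Finset.sum_comm]
    simp [← Finset.sum_mul]
    exact Or.inl rfl
  -- diagonal formula for μ'
  have hB : ∀ l : V, μ' (l, l) = ∑ i, ν i * ((1 - α) * edgeMul E i l / (dsum E i : ℝ)) := by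
    intro l
    rw [← hstat' (l, l), Fintype.sum_prod_type]
    refine Finset.sum_congr rfl fun i _ => ?_
    simp_rw [htr_diag]
    rw [← Finset.sum_mul]
  -- diagonal mass
  have hC : ∀ l : V, μ' (l, l) = (1 - α) * ν l := by
    intro l
    have h1 : ν l = μ' (l, l) + ∑ k ∈ Finset.univ.erase l, μ' (l, k) :=
      (Finset.add_sum_erase Finset.univ (fun k => μ' (l, k)) (Finset.mem_univ l)).symm
    have h2 : ∑ k ∈ Finset.univ.erase l, μ' (l, k) = α * ν l := by
      rw [Finset.sum_congr rfl fun k hk => hA l k (Finset.ne_of_mem_erase hk).symm]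
      have hsum_erase : ∑ k ∈ Finset.univ.erase l, edgeMul E l k = (dsum E l : ℝ) := by
        rw [Finset.sum_erase _ (edgeMul_self E hE l), sum_edgeMul]
      calc ∑ k ∈ Finset.univ.erase l, ν l * (α * edgeMul E l k / (dsum E l : ℝ))
          = (ν l * α / (dsum E l : ℝ)) * ∑ k ∈ Finset.univ.erase l, edgeMul E l k := by
            rw [Finset.mul_sum]; exact Finset.sum_congr rfl fun k _ => by ring
        _ = α * ν l := by rw [hsum_erase]; field_simp [hdne l]
    linarith [h1, h2]
  -- harmonicity of ν
  have hν2 : ∀ l : V, ν l = ∑ i, edgeMul E i l * (ν i / (dsum E i : ℝ)) := by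
    intro l
    have h1α : (1:ℝ) - α ≠ 0 := by linarith
    have h := hB l
    rw [hC l] at h
    have h' : (1 - α) * ν l = (1 - α) * ∑ i, edgeMul E i l * (ν i / (dsum E i : ℝ)) := by
      rw [h, Finset.mul_sum]; exact Finset.sum_congr rfl fun i _ => by ring
    exact mul_left_cancel₀ h1α h'
  set f : V → ℝ := fun i => ν i / (dsum E i : ℝ) with hfdef
  have hfν : ∀ i, ν i = f i * (dsum E i : ℝ) := fun i =>
    (div_mul_cancel₀ (ν i) (hdne i)).symm
  have hsym : ∀ l, ∑ i, edgeMul E i l = (dsum E l : ℝ) := by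
    intro l
    rw [Finset.sum_congr rfl fun i _ => edgeMul_symm E i l, sum_edgeMul]
  have key : ∀ l, ∑ i, edgeMul E i l * (f l - f i) = 0 := by
    intro l
    have : ∑ i, edgeMul E i l * (f l - f i)
        = (∑ i, edgeMul E i l) * f l - ∑ i, edgeMul E i l * f i := by
      rw [Finset.sum_mul, ← Finset.sum_sub_distrib]
      exact Finset.sum_congr rfl fun i _ => by ring
    rw [this, hsym l]
    have h2 : ∑ i, edgeMul E i l * f i = ν l := (hν2 l).symm
    rw [h2, hfν l]; ring
  -- maximum principle
  have hne : Nonempty V := Fintype.card_pos_iff.mp (by omega)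
  obtain ⟨l0, -, hl0⟩ := Finset.exists_max_image (Finset.univ : Finset V) f Finset.univ_nonempty
  have hstepM : ∀ l, f l = f l0 → ∀ i, edgeMul E i l ≠ 0 → f i = f l0 := by
    intro l hl i hi
    have h0 := key l
    simp only [hl] at h0
    have hnn' : ∀ i ∈ Finset.univ, (0:ℝ) ≤ edgeMul E i l * (f l0 - f i) := by
      intro i _
      exact mul_nonneg (edgeMul_nonneg _ _ _) (by linarith [hl0 i (Finset.mem_univ i)])
    have := (Finset.sum_eq_zero_iff_of_nonneg hnn').mp h0 i (Finset.mem_univ i)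
    rcases mul_eq_zero.mp this with h | h
    · exact absurd h hi
    · linarith
  have hfconst : ∀ j, f j = f l0 := by
    intro j
    have h := hconn l0 j
    induction h with
    | refl => rfl
    | tail hbc hr ih =>
      rename_i b c
      refine hstepM b ih c ?_
      have hpos : (0:ℝ) < edgeMul E c b := by
        rcases hr with h | h
        · have hb : b ∈ Nin E c := by simp [Nin, h]
          have h0 : (0:ℝ) ≤ if b ∈ Nout E c then 1 else 0 := by positivity
          simp only [edgeMul, if_pos hb]
          linarith
        · have hb : b ∈ Nout E c := by simp [Nout, h]
          have h0 : (0:ℝ) ≤ if b ∈ Nin E c then 1 else 0 := by positivity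
          simp only [edgeMul, if_pos hb]
          linarith
      exact ne_of_gt hpos
  have hνM : ∀ i, ν i = f l0 * (dsum E i : ℝ) := fun i => by
    rw [hfν i, hfconst i]
  -- normalization
  have hEne : E.Nonempty := by
    obtain ⟨v⟩ := hne
    have hdv := hd v
    unfold dsum at hdv
    rcases Nat.lt_or_ge 0 (Nout E v).card with h | h
    · obtain ⟨u, hu⟩ := Finset.card_pos.mp h
      exact ⟨(v, u), by simpa [Nout] using hu⟩
    · have h' : 0 < (Nin E v).card := by omega
      obtain ⟨u, hu⟩ := Finset.card_pos.mp h'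
      exact ⟨(u, v), by simpa [Nin] using hu⟩
  have hEcard : (0:ℝ) < (E.card : ℝ) := by exact_mod_cast Finset.card_pos.mpr hEne
  have hnorm : f l0 * (2 * (E.card : ℝ)) = 1 := by
    have h1 : ∑ e : V × V, μ' e = 1 := by
      rw [← hsum]
      rw [hμ'def]
      simp [Finset.sum_ite_mem, Finset.filter_mem_eq_inter]
    have h2 : ∑ e : V × V, μ' e = ∑ i, ν i := Fintype.sum_prod_type (f := μ')
    have h3 : ∑ i, ν i = f l0 * (2 * (E.card : ℝ)) := by
      rw [Finset.sum_congr rfl fun i _ => hνM i, ← Finset.mul_sum]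
      congr 1
      exact_mod_cast congrArg (Nat.cast : ℕ → ℝ) (sum_dsum E)
    rw [← h3, ← h2, h1]
  have hM : f l0 = 1 / (2 * (E.card : ℝ)) := by
    rw [eq_div_iff (ne_of_gt (by linarith))]
    linarith
  -- conclusion
  rintro ⟨i, j⟩ he
  rw [← hμ'eq _ he]
  by_cases hij : i = j
  · subst hij
    rw [hC i, hνM i, hM]
    unfold statDist
    simp only [if_pos rfl]
    rw [if_pos trivial]
    ring
  · rw [hA i j hij, hνM i, hM]
    unfold statDist
    simp only [if_neg hij]
    have hEc0 : (E.card : ℝ) ≠ 0 := ne_of_gt hEcard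
    field_simp [hdne i, hEc0]


end RWStmt
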